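/- arXiv:2406.13841 — 2 statements merged into one kernel-verified Lean document; each statement's English description precedes it below -/
import Mathlib

section
/- Let $N\ge 3$ and let $(a_v,(a_{i,k}))$ be a finitely supported tuple of nonnegative integers (not all zero, with $a_v\ge 1$) satisfying $a_v-\sum_i a_{i,k}=1$ for all $k$ and $-(N-2)a_v^2+\sum_{i,k}a_{i,k}^2=-(N-2)$. Suppose for each $k$ that $a_{1,k}$ is maximal among $\{a_{i,k}\}_i$. If $a_v>1$, then $(N-1)a_v-\sum_{k=1}^N a_{1,k} < a_v$, i.e. applying the central reflection $s_v$ strictly decreases the coordinate $a_v$. -/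
/-- Let `N ≥ 3` and let `(a_v, (a_{i,k}))` be a finitely supported tuple of
nonnegative integers with `a_v ≥ 1` (indeed `a_v > 1`) satisfying `a_v - ∑_i a_{i,k} = 1`
for all `k` and `-(N-2) a_v² + ∑_{i,k} a_{i,k}² = -(N-2)`, such that each `a_{1,k}` is
maximal in its leg. Then `(N-1) a_v - ∑_k a_{1,k} < a_v`, i.e. the central reflection
`s_v` strictly decreases `a_v`. Here `a i k` denotes `a_{i+1,k}`, so `a 0 k = a_{1,k}`. -/
theorem svCenter_strictly_decreases (N : ℕ) (hN : 3 ≤ N)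
    (av : ℤ) (a : ℕ → Fin N → ℤ)
    (hfin : {p : ℕ × Fin N | a p.1 p.2 ≠ 0}.Finite)
    (hnonneg : ∀ (i : ℕ) (k : Fin N), 0 ≤ a i k)
    (hlin : ∀ k : Fin N, av - ∑ᶠ i : ℕ, a i k = 1)
    (hquad : -((N : ℤ) - 2) * av ^ 2 + ∑ᶠ i : ℕ, ∑ k, a i k ^ 2 = -((N : ℤ) - 2))
    (hmax : ∀ (k : Fin N) (i : ℕ), a i k ≤ a 0 k)
    (hav : 1 < av) :
    ((N : ℤ) - 1) * av - ∑ k, a 0 k < av := by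
  classical
  set S : Finset ℕ := (hfin.image Prod.fst).toFinset with hS
  have hmem : ∀ i (k : Fin N), a i k ≠ 0 → i ∈ S := by
    intro i k h
    simp only [hS, Set.Finite.mem_toFinset, Set.mem_image]
    exact ⟨(i, k), h, rfl⟩
  have hsub : ∀ k : Fin N, (Function.support fun i => a i k) ⊆ ↑S := by
    intro k i hi; exact hmem i k hi
  have hlin' : ∀ k : Fin N, ∑ i ∈ S, a i k = av - 1 := by
    intro k
    have := hlin k
    rw [finsum_eq_sum_of_support_subset _ (hsub k)] at this
    linarith
  have hsub2 : (Function.support fun i => ∑ k, a i k ^ 2) ⊆ ↑S := by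
    intro i hi
    simp only [Function.mem_support] at hi
    by_contra h
    apply hi
    apply Finset.sum_eq_zero
    intro k _
    have : a i k = 0 := by
      by_contra h'
      exact h (hmem i k h')
    simp [this]
  have hquad' : ∑ i ∈ S, ∑ k, a i k ^ 2 = ((N : ℤ) - 2) * av ^ 2 - ((N : ℤ) - 2) := by
    rw [finsum_eq_sum_of_support_subset _ hsub2] at hquad
    linarith
  have hstep : ∀ k : Fin N, ∑ i ∈ S, a i k ^ 2 ≤ a 0 k * (av - 1) := by
    intro k
    rw [← hlin' k, Finset.mul_sum]
    apply Finset.sum_le_sum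
    intro i _
    have h1 := hnonneg i k
    have h2 := hmax k i
    nlinarith
  have hkey : ((N : ℤ) - 2) * av ^ 2 - ((N : ℤ) - 2) ≤ (∑ k, a 0 k) * (av - 1) := by
    rw [← hquad', Finset.sum_comm, Finset.sum_mul]
    exact Finset.sum_le_sum fun k _ => hstep k
  have hN' : (3 : ℤ) ≤ (N : ℤ) := by exact_mod_cast hN
  nlinarith [hkey, hav]
end

section
/- Let $V$ be an $n$-dimensional vector space over a field of characteristic zero with $n\ge 2$. The contraction map $ev_{1,3}: (V\otimes V^*)\otimes(V\otimes V^*)\to V\otimes V^*$ given by $v\otimes f\otimes w\otimes g \mapsto f(w)\, v\otimes g$, restricted to the summand $S^2 V\otimes S^2 V^*\subseteq S^2(V\otimes V^*)$, is surjective onto $V\otimes V^*$. -/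
open scoped TensorProduct

/-- The second symmetric power, realized (char 0) as symmetric tensors in `V ⊗ V`. -/
noncomputable def Sym2Power (K V : Type*) [Field K] [AddCommGroup V] [Module K V] :
    Submodule K (V ⊗[K] V) :=
  LinearMap.ker ((TensorProduct.comm K V V).toLinearMap - LinearMap.id)

/-- The contraction `ev_{1,3} : (V ⊗ V*) ⊗ (V ⊗ V*) → V ⊗ V*`,
`v ⊗ f ⊗ w ⊗ g ↦ f(w) • v ⊗ g`. -/
noncomputable def ev13 (K V : Type*) [Field K] [AddCommGroup V] [Module K V] :
    (V ⊗[K] Module.Dual K V) ⊗[K] (V ⊗[K] Module.Dual K V) →ₗ[K]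
      V ⊗[K] Module.Dual K V :=
  (TensorProduct.map LinearMap.id
      ((TensorProduct.lid K (Module.Dual K V)).toLinearMap
        ∘ₗ TensorProduct.map (contractLeft K V) LinearMap.id
        ∘ₗ (TensorProduct.assoc K (Module.Dual K V) V (Module.Dual K V)).symm.toLinearMap))
    ∘ₗ (TensorProduct.assoc K V (Module.Dual K V)
        (V ⊗[K] Module.Dual K V)).toLinearMap

/-- The summand `S²V ⊗ S²V* ⊆ S²(V ⊗ V*)`, as a submodule of `(V ⊗ V*) ⊗ (V ⊗ V*)` via
the canonical shuffle `(V ⊗ V) ⊗ (V* ⊗ V*) ≅ (V ⊗ V*) ⊗ (V ⊗ V*)`. -/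
noncomputable def sym2TensorSym2Dual (K V : Type*) [Field K] [AddCommGroup V]
    [Module K V] : Submodule K ((V ⊗[K] Module.Dual K V) ⊗[K] (V ⊗[K] Module.Dual K V)) :=
  Submodule.map
    (TensorProduct.tensorTensorTensorComm K V V (Module.Dual K V)
      (Module.Dual K V)).toLinearMap
    (LinearMap.range
      (TensorProduct.map (Sym2Power K V).subtype
        (Sym2Power K (Module.Dual K V)).subtype))

lemma mem_sym2 (K V : Type*) [Field K] [AddCommGroup V] [Module K V] (a b : V) :
    a ⊗ₜ[K] b + b ⊗ₜ[K] a ∈ Sym2Power K V := by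
  simp only [Sym2Power, LinearMap.mem_ker, LinearMap.sub_apply, LinearMap.id_coe, id_eq,
    LinearEquiv.coe_coe, map_add, TensorProduct.comm_tmul]
  abel

lemma ev13_tmul (K V : Type*) [Field K] [AddCommGroup V] [Module K V]
    (a b : V) (f h : Module.Dual K V) :
    ev13 K V ((a ⊗ₜ f) ⊗ₜ (b ⊗ₜ h)) = f b • a ⊗ₜ h := by
  simp [ev13, TensorProduct.smul_tmul, TensorProduct.tmul_smul]

lemma keyA (K V : Type*) [Field K] [AddCommGroup V] [Module K V]
    (a b : V) (f h : Module.Dual K V) :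
    ∃ x ∈ sym2TensorSym2Dual K V,
      ev13 K V x = f b • a ⊗ₜ h + h b • a ⊗ₜ f + f a • b ⊗ₜ h + h a • b ⊗ₜ f := by
  refine ⟨(TensorProduct.tensorTensorTensorComm K V V _ _).toLinearMap
      ((a ⊗ₜ b + b ⊗ₜ a) ⊗ₜ (f ⊗ₜ h + h ⊗ₜ f)), ?_, ?_⟩
  · exact ⟨_, ⟨⟨_, mem_sym2 K V a b⟩ ⊗ₜ ⟨_, mem_sym2 K _ f h⟩, by simp⟩, rfl⟩
  · simp only [TensorProduct.tmul_add, TensorProduct.add_tmul, map_add,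
      TensorProduct.tensorTensorTensorComm_tmul, ev13_tmul, LinearEquiv.coe_coe]
    abel

/-- for an `n`-dimensional vector space `V` with `n ≥ 2` over a field of
characteristic zero, the contraction `ev_{1,3}` restricted to the summand
`S²V ⊗ S²V* ⊆ S²(V ⊗ V*)` is surjective onto `V ⊗ V*`. -/
theorem ev13_surjective_on_sym2_sym2 (K V : Type*) [Field K] [CharZero K]
    [AddCommGroup V] [Module K V] [FiniteDimensional K V]
    (hdim : 2 ≤ Module.finrank K V) :
    ∀ y : V ⊗[K] Module.Dual K V,
      ∃ x ∈ sym2TensorSym2Dual K V, ev13 K V x = y := by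
  set W := Submodule.map (ev13 K V) (sym2TensorSym2Dual K V) with hW
  have keyA' : ∀ (a b : V) (f h : Module.Dual K V),
      (f b • a ⊗ₜ[K] h + h b • a ⊗ₜ f + f a • b ⊗ₜ h + h a • b ⊗ₜ f) ∈ W := by
    intro a b f h
    obtain ⟨x, hx, he⟩ := keyA K V a b f h
    exact ⟨x, hx, he⟩
  have key0 : ∀ (a : V) (h : Module.Dual K V), h a ≠ 0 → a ⊗ₜ[K] h ∈ W := by
    intro a h hne
    have hmem := keyA' a a h h
    have h4 : (4 : K) * h a ≠ 0 := mul_ne_zero (by norm_num) hne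
    have e : h a • a ⊗ₜ[K] h + h a • a ⊗ₜ h + h a • a ⊗ₜ h + h a • a ⊗ₜ h
        = ((4 : K) * h a) • a ⊗ₜ h := by module
    rw [e] at hmem
    have := W.smul_mem ((4 : K) * h a)⁻¹ hmem
    rwa [smul_smul, inv_mul_cancel₀ h4, one_smul] at this
  have key : ∀ (a : V) (h : Module.Dual K V), a ⊗ₜ[K] h ∈ W := by
    intro a h
    by_cases h0 : h = 0
    · subst h0; rw [TensorProduct.tmul_zero]; exact zero_mem _
    · obtain ⟨c, hc⟩ := DFunLike.ne_iff.mp h0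
      simp only [LinearMap.zero_apply] at hc
      by_cases ha : h a = 0
      · have h1 : (a + c) ⊗ₜ[K] h ∈ W := key0 _ _ (by simp [ha, hc])
        have h2 : c ⊗ₜ[K] h ∈ W := key0 _ _ hc
        have h3 : ((a + c) ⊗ₜ[K] h : V ⊗[K] Module.Dual K V) + (-1 : K) • (c ⊗ₜ[K] h)
            = a ⊗ₜ[K] h := by
          rw [TensorProduct.add_tmul]; module
        have := add_mem h1 (W.smul_mem (-1 : K) h2)
        rwa [h3] at this
      · exact key0 a h ha
  intro y
  have hy : y ∈ W := by
    induction y using TensorProduct.induction_on with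
    | zero => exact zero_mem _
    | tmul a h => exact key a h
    | add x y hx hy => exact add_mem hx hy
  exact hy
end
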